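/- Let p be a prime, U_{p+1} the unitriangular (p+1)×(p+1) matrices over ℤ/p, and let A = I + a·(E_{1,2}+...+E_{p-1,p}) + a'·E_{p,p+1} and B = I + b·(E_{1,2}+...+E_{p-1,p}) + b'·E_{p,p+1}. Then the commutator [B,A] = B⁻¹A⁻¹BA has all entries equal to those of the identity except possibly in the last column, and the (1,p+1)-entry pattern is governed by the quantity s = ab' - a'b: if s = 0 then [B,A] ∈ I + (span of E_{h,p+1}, 1 ≤ h ≤ p-1) with coefficients all multiplied by s, i.e. [B,A] = I. -/

import Mathlib

/-! The off-diagonal parts `X`, `Y` of `A = 1 + X` and `B = 1 + Y` are superdiagonal, so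
`XY` and `YX` live on the second superdiagonal, with entries `c i * d (i+1)` and `d i * c (i+1)`.
For the step sequences `c = (a, …, a, a')`, `d = (b, …, b, b')` these differ only at the step,
by `ab' - a'b = 0`. Hence `X` and `Y` commute, so do `A` and `B`, and the commutator of two
commuting unitriangular (hence invertible) matrices is trivial. -/

namespace Matrix

variable {n : ℕ} {R : Type*} [CommRing R]

def superdiag (c : ℕ → R) : Matrix (Fin n) (Fin n) R :=
  of fun i j => if (j : ℕ) = i + 1 then c i else 0

theorem superdiag_mul_superdiag_apply (c d : ℕ → R) (i j : Fin n) :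
    (superdiag c * superdiag d : Matrix (Fin n) (Fin n) R) i j =
      if (j : ℕ) = i + 2 then c i * d (i + 1) else 0 := by
  rw [mul_apply]
  split_ifs with hj
  · have hi : (i : ℕ) + 1 < n := by omega
    rw [Finset.sum_eq_single ⟨i + 1, hi⟩]
    · simp [superdiag, hj]
    · intro k _ hk
      have : (k : ℕ) ≠ i + 1 := fun h => hk (Fin.ext h)
      simp [superdiag, this]
    · simp
  · refine Finset.sum_eq_zero fun k _ => ?_
    simp only [superdiag, of_apply]
    split_ifs <;> first | omega | simp

theorem commute_superdiag {c d : ℕ → R} (h : ∀ i, c i * d (i + 1) = d i * c (i + 1)) :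
    Commute (superdiag c : Matrix (Fin n) (Fin n) R) (superdiag d) := by
  ext i j
  simp only [superdiag_mul_superdiag_apply, h]

theorem commute_superdiag_step {k : ℕ} {a a' b b' : R} (h : a * b' - a' * b = 0) :
    Commute (superdiag (fun i => if i + 1 < k then a else a') : Matrix (Fin n) (Fin n) R)
      (superdiag fun i => if i + 1 < k then b else b') := by
  refine commute_superdiag fun i => ?_
  split_ifs <;> first | omega | ring | linear_combination h

theorem det_one_add_superdiag (c : ℕ → R) :
    (1 + superdiag c : Matrix (Fin n) (Fin n) R).det = 1 := by
  have hupper : (1 + superdiag c : Matrix (Fin n) (Fin n) R).IsUpperTriangular := by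
    intro i j (hji : j < i)
    have hne : j ≠ i := hji.ne
    have : (j : ℕ) ≠ i + 1 := by omega
    simp [superdiag, hne.symm, this]
  rw [det_of_isUpperTriangular hupper]
  exact Finset.prod_eq_one fun i _ => by simp [superdiag]

theorem nonsing_inv_mul_nonsing_inv_mul_mul_of_commute {m : Type*} [Fintype m] [DecidableEq m]
    {A B : Matrix m m R} (hA : IsUnit A.det) (hB : IsUnit B.det) (hAB : Commute A B) :
    B⁻¹ * A⁻¹ * B * A = 1 := by
  calc B⁻¹ * A⁻¹ * B * A = B⁻¹ * (A⁻¹ * A) * B := by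
        rw [mul_assoc _ B, ← hAB.eq]
        simp only [mul_assoc]
    _ = 1 := by rw [nonsing_inv_mul A hA, mul_one, nonsing_inv_mul B hB]

end Matrix

theorem stmt12_general (p : ℕ) (a a' b b' : ZMod p)
    (hs : a * b' - a' * b = 0) :
    let A : Matrix (Fin (p + 1)) (Fin (p + 1)) (ZMod p) :=
      1 + Matrix.of (fun (i j : Fin (p + 1)) =>
        if (j : ℕ) = (i : ℕ) + 1 then (if (i : ℕ) + 1 < p then a else a') else 0)
    let B : Matrix (Fin (p + 1)) (Fin (p + 1)) (ZMod p) :=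
      1 + Matrix.of (fun (i j : Fin (p + 1)) =>
        if (j : ℕ) = (i : ℕ) + 1 then (if (i : ℕ) + 1 < p then b else b') else 0)
    B⁻¹ * A⁻¹ * B * A = 1 := by
  intro A B
  have hA : A = 1 + Matrix.superdiag fun i => if i + 1 < p then a else a' := rfl
  have hB : B = 1 + Matrix.superdiag fun i => if i + 1 < p then b else b' := rfl
  rw [hA, hB]
  refine Matrix.nonsing_inv_mul_nonsing_inv_mul_mul_of_commute ?_ ?_ ?_
  · simp only [Matrix.det_one_add_superdiag, isUnit_one]
  · simp only [Matrix.det_one_add_superdiag, isUnit_one]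
  · exact (Commute.one_right _).add_right
      ((Commute.one_left _).add_left (Matrix.commute_superdiag_step hs))

/-- Let `A = I + a·(E_{1,2} + ⋯ + E_{p-1,p}) + a'·E_{p,p+1}` and
`B = I + b·(E_{1,2} + ⋯ + E_{p-1,p}) + b'·E_{p,p+1}` in the unitriangular group `U_{p+1}`
over `ℤ/p`. If `s = ab' - a'b = 0`, then the commutator `[B,A] = B⁻¹A⁻¹BA` equals the
identity matrix. -/
theorem stmt12 (p : ℕ) [Fact p.Prime] (a a' b b' : ZMod p)
    (hs : a * b' - a' * b = 0) :
    let A : Matrix (Fin (p + 1)) (Fin (p + 1)) (ZMod p) :=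
      1 + Matrix.of (fun (i j : Fin (p + 1)) =>
        if (j : ℕ) = (i : ℕ) + 1 then (if (i : ℕ) + 1 < p then a else a') else 0)
    let B : Matrix (Fin (p + 1)) (Fin (p + 1)) (ZMod p) :=
      1 + Matrix.of (fun (i j : Fin (p + 1)) =>
        if (j : ℕ) = (i : ℕ) + 1 then (if (i : ℕ) + 1 < p then b else b') else 0)
    B⁻¹ * A⁻¹ * B * A = 1 :=
  stmt12_general p a a' b b' hs
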